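/- arXiv:2210.01295 — 4 statements merged into one kernel-verified Lean document; each statement's English description precedes it below -/
import Mathlib

section
/- Let f(d) = (p·q^d + (1-p)·(1-q)^d) / ((1-p)·q^d + p·(1-q)^d) for parameters p, q ∈ (1/2, 1). Consider a Bernoulli arm whose mean is q with probability 1-p and 1-q with probability p (the 'bad instance'). Given any history of pulls with score d (number of 1s minus number of 0s), if d' denotes the updated score after one additional pull, then the conditional expectation of f(d') given the history equals f(d). That is, f of the score is a martingale under the bad instance. -/
/-!
Write `N d = p q^d + (1-p)(1-q)^d` and `D d = (1-p) q^d + p (1-q)^d`, so `f = N / D`.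
Both are combinations of `q^d` and `(1-q)^d`, whose bases are the roots of
`x^2 - x + q(1-q)`; hence both satisfy `g (d+1) + q(1-q) g (d-1) = g d`.
The predictive probability of a `1` is `D (d+1) / D d`, and by the recurrence that of a `0`
is `q(1-q) D (d-1) / D d`. The expected next value of `f` is therefore
`(N (d+1) + q(1-q) N (d-1)) / D d = N d / D d`.
-/

noncomputable def zpowMix (a b q : ℝ) (d : ℤ) : ℝ := a * q ^ d + b * (1 - q) ^ d

lemma zpowMix_pos {a b q : ℝ} (ha : 0 < a) (hb : 0 < b) (hq₀ : 0 < q) (hq₁ : q < 1) (d : ℤ) :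
    0 < zpowMix a b q d := by
  have : 0 < 1 - q := by linarith
  unfold zpowMix
  positivity

lemma zpowMix_add_one_add_mul_sub_one {q : ℝ} (hq₀ : q ≠ 0) (hq₁ : 1 - q ≠ 0) (a b : ℝ) (d : ℤ) :
    zpowMix a b q (d + 1) + q * (1 - q) * zpowMix a b q (d - 1) = zpowMix a b q d := by
  simp only [zpowMix, zpow_add_one₀ hq₀, zpow_add_one₀ hq₁, zpow_sub_one₀ hq₀,
    zpow_sub_one₀ hq₁]
  field_simp
  ring

lemma predictive_one_eq {a b q : ℝ} {d : ℤ} (hD : zpowMix a b q d ≠ 0) (hq₀ : q ≠ 0)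
    (hq₁ : 1 - q ≠ 0) :
    q * (a * q ^ d / zpowMix a b q d) + (1 - q) * (1 - a * q ^ d / zpowMix a b q d) =
      zpowMix a b q (d + 1) / zpowMix a b q d := by
  simp only [zpowMix, zpow_add_one₀ hq₀, zpow_add_one₀ hq₁] at hD ⊢
  field_simp
  ring

/-- Under the bad instance (prior probability `1-p` of the arm being good, i.e. having
mean `q`; probability `p` of being bad, i.e. mean `1-q`), the likelihood ratio
`f(d) = (p q^d + (1-p)(1-q)^d)/((1-p) q^d + p (1-q)^d)` of the score
`d = (#1s) - (#0s)` is a martingale: conditioned on any history with score `d`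
(under which, by Bayes' rule, the arm is good with probability
`(1-p) q^d / ((1-p) q^d + p (1-q)^d)`), the expectation of `f` at the updated
score after one more pull equals `f(d)`. -/
theorem stmt0 (p q : ℝ) (hp : p ∈ Set.Ioo (1/2 : ℝ) 1) (hq : q ∈ Set.Ioo (1/2 : ℝ) 1)
    (f : ℤ → ℝ)
    (hf : ∀ d : ℤ, f d = (p * q ^ d + (1 - p) * (1 - q) ^ d) /
      ((1 - p) * q ^ d + p * (1 - q) ^ d))
    (d : ℤ)
    -- posterior probability (given the history with score d) that the arm is good:
    (postGood : ℝ)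
    (hpost : postGood = (1 - p) * q ^ d / ((1 - p) * q ^ d + p * (1 - q) ^ d))
    -- probability that the next pull returns 1 (score goes to d+1):
    (probOne : ℝ)
    (hprobOne : probOne = q * postGood + (1 - q) * (1 - postGood)) :
    probOne * f (d + 1) + (1 - probOne) * f (d - 1) = f d := by
  obtain ⟨hp₁, hp₂⟩ := hp
  obtain ⟨hq₁, hq₂⟩ := hq
  have hq₀ : q ≠ 0 := by linarith
  have hq₁' : 1 - q ≠ 0 := by linarith
  have hD (k : ℤ) : 0 < zpowMix (1 - p) p q k := zpowMix_pos (by linarith) (by linarith)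
    (by linarith) hq₂ k
  have hf' (k : ℤ) : f k = zpowMix p (1 - p) q k / zpowMix (1 - p) p q k := hf k
  have hOne : probOne = zpowMix (1 - p) p q (d + 1) / zpowMix (1 - p) p q d := by
    rw [hprobOne, hpost]
    exact predictive_one_eq (hD d).ne' hq₀ hq₁'
  have hZero :
      1 - probOne = q * (1 - q) * zpowMix (1 - p) p q (d - 1) / zpowMix (1 - p) p q d := by
    rw [hOne, eq_div_iff (hD d).ne', sub_mul, div_mul_cancel₀ _ (hD d).ne']
    linear_combination -zpowMix_add_one_add_mul_sub_one hq₀ hq₁' (1 - p) p d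
  rw [hZero, hOne, hf', hf', hf', ← zpowMix_add_one_add_mul_sub_one hq₀ hq₁' p (1 - p) d]
  field_simp [(hD d).ne', (hD (d + 1)).ne', (hD (d - 1)).ne']
end

section
/- Let p = (1+ε)/2 and q = (1+Δ)/2 with ε, Δ ∈ (0, 1/4), and let f(d) = (p·q^d + (1-p)·(1-q)^d) / ((1-p)·q^d + p·(1-q)^d). Then there is a universal constant C such that for every integer d, f(d+1) - f(d-1) ≤ C·ε·Δ. -/
/-!
Write `x = q^(d-1)` and `y = (1-q)^(d-1)`, so that `f(d-1)` and `f(d+1)` are the same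
likelihood ratio evaluated at `(x, y)` and at `(q² x, (1-q)² y)`. Cross-multiplying, the difference
of two such ratios is `(2p-1)(x'y - xy')` over the product of the denominators, and here
`x'y - xy' = (q² - (1-q)²) xy = Δ xy` while `2p - 1 = ε`. The two denominators are at least `p y` and
`(1-p) q² x`, so `xy` over their product is at most `1 / (p (1-p) q²) ≤ 64/3`.
-/

noncomputable def likelihoodRatio (p x y : ℝ) : ℝ :=
  (p * x + (1 - p) * y) / ((1 - p) * x + p * y)

lemma likelihoodRatio_sub_likelihoodRatio {p x y x' y' : ℝ}
    (h : (1 - p) * x + p * y ≠ 0) (h' : (1 - p) * x' + p * y' ≠ 0) :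
    likelihoodRatio p x' y' - likelihoodRatio p x y =
      (2 * p - 1) * (x' * y - x * y') / (((1 - p) * x' + p * y') * ((1 - p) * x + p * y)) := by
  rw [likelihoodRatio, likelihoodRatio, div_sub_div _ _ h' h]
  ring_nf

lemma likelihoodRatio_mul_sq_sub_le {p a b x y : ℝ} (hp : 1 / 2 ≤ p) (hp1 : p < 1)
    (ha : 0 < a) (hba : b ^ 2 ≤ a ^ 2) (hx : 0 < x) (hy : 0 < y) :
    likelihoodRatio p (x * a ^ 2) (y * b ^ 2) - likelihoodRatio p x y ≤
      (2 * p - 1) * (a ^ 2 - b ^ 2) / (p * (1 - p) * a ^ 2) := by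
  have hq : 0 < 1 - p := by linarith
  have hden : p * y ≤ (1 - p) * x + p * y := le_add_of_nonneg_left (mul_pos hq hx).le
  have hden' : (1 - p) * a ^ 2 * x ≤ (1 - p) * (x * a ^ 2) + p * (y * b ^ 2) :=
    calc (1 - p) * a ^ 2 * x = (1 - p) * (x * a ^ 2) := by ring
      _ ≤ _ := le_add_of_nonneg_right (mul_nonneg (by linarith) (by positivity))
  have hpos : 0 < p * y := mul_pos (by linarith) hy
  have hpos' : 0 < (1 - p) * a ^ 2 * x := by positivity
  have hprod : p * (1 - p) * a ^ 2 * (x * y) ≤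
      ((1 - p) * (x * a ^ 2) + p * (y * b ^ 2)) * ((1 - p) * x + p * y) := by
    calc p * (1 - p) * a ^ 2 * (x * y) = ((1 - p) * a ^ 2 * x) * (p * y) := by ring
      _ ≤ _ := mul_le_mul hden' hden hpos.le (by linarith)
  have hxy : x * a ^ 2 * y - x * (y * b ^ 2) = (a ^ 2 - b ^ 2) * (x * y) := by ring
  rw [likelihoodRatio_sub_likelihoodRatio (by linarith) (by linarith), hxy, ← mul_assoc,
    div_le_div_iff₀ (mul_pos (by linarith) (by linarith)) (by positivity)]
  have hnum : 0 ≤ (2 * p - 1) * (a ^ 2 - b ^ 2) := mul_nonneg (by linarith) (by linarith)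
  calc (2 * p - 1) * (a ^ 2 - b ^ 2) * (x * y) * (p * (1 - p) * a ^ 2)
      = (2 * p - 1) * (a ^ 2 - b ^ 2) * (p * (1 - p) * a ^ 2 * (x * y)) := by ring
    _ ≤ _ := mul_le_mul_of_nonneg_left hprod hnum

/-- With `p = (1+ε)/2`, `q = (1+Δ)/2`, `ε, Δ ∈ (0, 1/4)`, and
`f(d) = (p q^d + (1-p)(1-q)^d)/((1-p) q^d + p (1-q)^d)`, there is a universal
constant `C > 0` such that `f(d+1) - f(d-1) ≤ C ε Δ` for every integer `d`. -/
theorem stmt1 :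
    ∃ C : ℝ, 0 < C ∧
      ∀ ε Δ : ℝ, ε ∈ Set.Ioo (0 : ℝ) (1/4) → Δ ∈ Set.Ioo (0 : ℝ) (1/4) →
        ∀ d : ℤ,
          (fun d : ℤ =>
              (((1 + ε)/2) * ((1 + Δ)/2) ^ d + (1 - (1 + ε)/2) * (1 - (1 + Δ)/2) ^ d) /
              ((1 - (1 + ε)/2) * ((1 + Δ)/2) ^ d + ((1 + ε)/2) * (1 - (1 + Δ)/2) ^ d))
            (d + 1)
          - (fun d : ℤ =>
              (((1 + ε)/2) * ((1 + Δ)/2) ^ d + (1 - (1 + ε)/2) * (1 - (1 + Δ)/2) ^ d) /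
              ((1 - (1 + ε)/2) * ((1 + Δ)/2) ^ d + ((1 + ε)/2) * (1 - (1 + Δ)/2) ^ d))
            (d - 1)
          ≤ C * ε * Δ := by
  refine ⟨64 / 3, by norm_num, ?_⟩
  rintro ε Δ ⟨hε0, hε1⟩ ⟨hΔ0, hΔ1⟩ d
  set p := (1 + ε) / 2 with hp
  set q := (1 + Δ) / 2 with hq
  have hshift : ∀ t : ℝ, 0 < t → t ^ (d + 1) = t ^ (d - 1) * t ^ 2 := fun t ht => by
    rw [show d + 1 = d - 1 + 2 by ring, zpow_add₀ ht.ne']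
    norm_cast
  show likelihoodRatio p (q ^ (d + 1)) ((1 - q) ^ (d + 1))
      - likelihoodRatio p (q ^ (d - 1)) ((1 - q) ^ (d - 1)) ≤ _
  rw [hshift q (by linarith), hshift (1 - q) (by linarith)]
  have hpq : 3 / 64 ≤ p * (1 - p) * q ^ 2 := by
    have hp' : 3 / 16 ≤ p * (1 - p) := by nlinarith
    have hq' : 1 / 4 ≤ q ^ 2 := by nlinarith
    nlinarith
  calc _ ≤ (2 * p - 1) * (q ^ 2 - (1 - q) ^ 2) / (p * (1 - p) * q ^ 2) :=
        likelihoodRatio_mul_sq_sub_le (by linarith) (by linarith) (by linarith)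
          (by nlinarith) (zpow_pos (by linarith) _) (zpow_pos (by linarith) _)
    _ = ε * Δ / (p * (1 - p) * q ^ 2) := by ring
    _ ≤ ε * Δ / (3 / 64) := by gcongr
    _ = 64 / 3 * ε * Δ := by ring
end

section
/- Let H be a finite multiset of n reals with (1−α)-quantile value μ* = Q_{1−α}(H). Suppose each element μ_j is assigned a gap Δ_j ≥ |μ_j − μ*| and confidence bounds satisfying μ_j − Δ_j/2 < L_j ≤ μ_j ≤ U_j < μ_j + Δ_j/2. Then for a fixed element j with gap Δ_j, every element k of H with μ_k ≤ μ* satisfies U_k < μ* + Δ_j/2 provided additionally Δ_j ≥ Δ_k or Δ_k = μ* − μ_k; consequently Q_{1−α}({U_k : k ∈ H}) < μ* + Δ_j/2. -/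
/-!
The empirical CDF `x ↦ #{k | v k ≤ x}` is constant just to the right of any point, so the
infimum defining the quantile is attained: at least a `1 - α` fraction of the `μ k` lie below
`μ*`. For each of these, `U k < μ* + Δ j / 2`: directly if `Δ k ≤ Δ j`, and because
`U k < (μ k + μ*) / 2 ≤ μ*` if `Δ k = μ* - μ k` (note `Δ j > 0`, as
`μ j ≤ U j < μ j + Δ j / 2`). The largest such `U k` therefore witnesses the quantile bound
for `U`.
-/

/-- The empirical `(1-α)`-quantile of a finite family of `n` reals. -/
noncomputable def empQuantile (n : ℕ) (α : ℝ) (v : Fin n → ℝ) : ℝ :=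
  sInf {x : ℝ | 1 - α ≤ ((Finset.univ.filter fun j => v j ≤ x).card : ℝ) / n}

open Filter Topology Finset

theorem eventually_nhdsWithin_Ici_forall_le_iff {ι β : Type*} [Finite ι] [LinearOrder β]
    [TopologicalSpace β] [OrderTopology β] (v : ι → β) (c : β) :
    ∀ᶠ x in 𝓝[≥] c, ∀ k, v k ≤ x ↔ v k ≤ c := by
  refine eventually_all.2 fun k => ?_
  rcases le_or_gt (v k) c with hk | hk
  · filter_upwards [self_mem_nhdsWithin] with x (hx : c ≤ x)
    exact iff_of_true (hk.trans hx) hk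
  · filter_upwards [nhdsWithin_le_nhds (Iio_mem_nhds hk)] with x (hx : x < v k)
    exact iff_of_false hx.not_ge hk.not_ge

section empQuantile

variable {n : ℕ} {α : ℝ}

theorem empQuantile_set_bddBelow (hα : α < 1) (v : Fin n → ℝ) :
    BddBelow {x : ℝ | 1 - α ≤ (#{k | v k ≤ x} : ℝ) / n} := by
  obtain ⟨b, hb⟩ := (Set.finite_range v).bddBelow
  refine ⟨b, fun x hx => ?_⟩
  obtain ⟨k, hk⟩ : ({k | v k ≤ x} : Finset (Fin n)).Nonempty := by
    rw [nonempty_iff_ne_empty]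
    intro h
    simp only [Set.mem_ofPred_eq, h, card_empty, Nat.cast_zero, zero_div] at hx
    linarith
  exact (hb ⟨k, rfl⟩).trans (mem_filter.1 hk).2

theorem empQuantile_set_nonempty (hn : 0 < n) (hα : 0 ≤ α) (v : Fin n → ℝ) :
    {x : ℝ | 1 - α ≤ (#{k | v k ≤ x} : ℝ) / n}.Nonempty := by
  obtain ⟨b, hb⟩ := (Set.finite_range v).bddAbove
  refine ⟨b, ?_⟩
  have hall : ({k | v k ≤ b} : Finset (Fin n)) = univ := by
    ext k
    simpa using hb ⟨k, rfl⟩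
  have hn' : (n : ℝ) ≠ 0 := by positivity
  simp only [Set.mem_ofPred_eq, hall, card_univ, Fintype.card_fin, div_self hn']
  linarith

theorem one_sub_le_card_le_empQuantile (hn : 0 < n) (hα₀ : 0 ≤ α) (hα₁ : α < 1)
    (v : Fin n → ℝ) : 1 - α ≤ (#{k | v k ≤ empQuantile n α v} : ℝ) / n := by
  set S := {x : ℝ | 1 - α ≤ (#{k | v k ≤ x} : ℝ) / n}
  have hbdd : BddBelow S := empQuantile_set_bddBelow hα₁ v
  have hcl : empQuantile n α v ∈ closure S :=
    csInf_mem_closure (empQuantile_set_nonempty hn hα₀ v) hbdd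
  have := mem_closure_iff_nhdsWithin_neBot.1 hcl
  have hright : 𝓝[S] (empQuantile n α v) ≤ 𝓝[≥] (empQuantile n α v) :=
    nhdsWithin_mono _ fun x hx => csInf_le hbdd hx
  obtain ⟨x, hxS, hx⟩ := (eventually_mem_nhdsWithin.and
    (hright (eventually_nhdsWithin_Ici_forall_le_iff v _))).exists
  rw [← filter_congr fun k _ => hx k]
  exact hxS

theorem empQuantile_le_of_forall_le (hα : α < 1) {v : Fin n → ℝ} {s : Finset (Fin n)}
    (hs : 1 - α ≤ (#s : ℝ) / n) {x : ℝ} (hx : ∀ k ∈ s, v k ≤ x) : empQuantile n α v ≤ x := by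
  refine csInf_le (empQuantile_set_bddBelow hα v) (hs.trans ?_)
  gcongr
  exact fun k hk => mem_filter.2 ⟨mem_univ k, hx k hk⟩

theorem empQuantile_lt_of_forall_lt (hα : α < 1) {v : Fin n → ℝ} {s : Finset (Fin n)}
    (hs : 1 - α ≤ (#s : ℝ) / n) {b : ℝ} (hb : ∀ k ∈ s, v k < b) : empQuantile n α v < b := by
  have hne : s.Nonempty := by
    rw [nonempty_iff_ne_empty]
    rintro rfl
    simp only [card_empty, Nat.cast_zero, zero_div] at hs
    linarith
  exact (empQuantile_le_of_forall_le hα hs fun k hk => le_sup' v hk).trans_lt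
    ((sup'_lt_iff hne).2 hb)

end empQuantile

theorem stmt8_general (n : ℕ) (α : ℝ) (hα : α ∈ Set.Ioo (0 : ℝ) 1)
    (μ U Δ : Fin n → ℝ) (μstar : ℝ) (hμstar : μstar = empQuantile n α μ)
    (hU : ∀ k, μ k ≤ U k ∧ U k < μ k + Δ k / 2)
    (j : Fin n)
    (hcase : ∀ k, Δ k ≤ Δ j ∨ Δ k = μstar - μ k) :
    (∀ k, μ k ≤ μstar → U k < μstar + Δ j / 2) ∧
    empQuantile n α U < μstar + Δ j / 2 := by
  have hbelow : ∀ k, μ k ≤ μstar → U k < μstar + Δ j / 2 := by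
    intro k hk
    rcases hcase k with hΔ | hΔ <;> linarith [hU k, hU j]
  have hquant : 1 - α ≤ (#{k | μ k ≤ μstar} : ℝ) / n := by
    rw [hμstar]
    exact one_sub_le_card_le_empQuantile j.pos hα.1.le hα.2 μ
  exact ⟨hbelow, empQuantile_lt_of_forall_lt hα.2 hquant fun k hk => hbelow k (mem_filter.1 hk).2⟩

/-- Let `μ* = Q_{1-α}(μ)` and suppose each element `k` has gap `Δ k ≥ |μ k − μ*|` and
confidence bounds `μ k − Δ k / 2 < L k ≤ μ k ≤ U k < μ k + Δ k / 2`.  Fix `j` and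
suppose for each `k` either `Δ j ≥ Δ k` or `Δ k = μ* − μ k`.  Then every `k` with
`μ k ≤ μ*` satisfies `U k < μ* + Δ j / 2`; consequently
`Q_{1-α}(U) < μ* + Δ j / 2`. -/
theorem stmt8 (n : ℕ) (hn : 0 < n) (α : ℝ) (hα : α ∈ Set.Ioo (0 : ℝ) 1)
    (μ L U Δ : Fin n → ℝ) (μstar : ℝ) (hμstar : μstar = empQuantile n α μ)
    (hgap : ∀ k, |μ k - μstar| ≤ Δ k)
    (hL : ∀ k, μ k - Δ k / 2 < L k ∧ L k ≤ μ k)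
    (hU : ∀ k, μ k ≤ U k ∧ U k < μ k + Δ k / 2)
    (j : Fin n)
    (hcase : ∀ k, Δ k ≤ Δ j ∨ Δ k = μstar - μ k) :
    (∀ k, μ k ≤ μstar → U k < μstar + Δ j / 2) ∧
    empQuantile n α U < μstar + Δ j / 2 :=
  stmt8_general n α hα μ U Δ μstar hμstar hU j hcase
end

section
/- Let H₁, …, H_K be finite multisets of reals each of size n, with empirical (1−α)-quantiles Q₁, …, Q_K, and let H* attain the maximum quantile Q* = max_k Q_k. Suppose for every element μ with valid confidence bounds L ≤ μ ≤ U we have U − L < Δ/2 (all confidence widths below Δ/2), and the bounds are valid for all elements. If Ĥ maximizes Q_{1−α}({L_j : j ∈ H}) over all groups H, then Q_{1−α}(Ĥ) ≥ Q* − Δ, where Q_{1−α}(Ĥ) denotes the true (1−α)-quantile of Ĥ's means. -/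
/-!
Lowering every element by at most `c` lowers the empirical quantile by at most `c`. Hence for
every group `g`, from `μ_g ≤ U_g < L_g + Δ/2` and `L_ĝ ≤ μ_ĝ`,
`Q(μ_g) ≤ Q(L_g) + Δ/2 ≤ Q(L_ĝ) + Δ/2 ≤ Q(μ_ĝ) + Δ/2`.
-/

section EmpQuantile

variable {n : ℕ} {α : ℝ}

def empQuantileSet (n : ℕ) (α : ℝ) (v : Fin n → ℝ) : Set ℝ :=
  {x : ℝ | 1 - α ≤ ((Finset.univ.filter fun j => v j ≤ x).card : ℝ) / n}

theorem empQuantile_eq_sInf (v : Fin n → ℝ) :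
    empQuantile n α v = sInf (empQuantileSet n α v) :=
  rfl

theorem mem_empQuantileSet_of_imp {v w : Fin n → ℝ} {x y : ℝ}
    (hx : x ∈ empQuantileSet n α v) (h : ∀ j, v j ≤ x → w j ≤ y) :
    y ∈ empQuantileSet n α w := by
  refine le_trans hx (div_le_div_of_nonneg_right ?_ (Nat.cast_nonneg (α := ℝ) n))
  exact Nat.cast_le.mpr (Finset.card_le_card fun j hj => by simp_all)

theorem empQuantileSet_nonempty (hn : 0 < n) (hα : 0 ≤ α) (v : Fin n → ℝ) :
    (empQuantileSet n α v).Nonempty := by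
  obtain ⟨M, hM⟩ := (Set.finite_range v).bddAbove
  refine ⟨M, ?_⟩
  have hall : (Finset.univ.filter fun j => v j ≤ M) = Finset.univ :=
    Finset.filter_true_of_mem fun j _ => hM (Set.mem_range_self j)
  rw [empQuantileSet, Set.mem_ofPred_eq, hall, Finset.card_univ, Fintype.card_fin,
    div_self (Nat.cast_ne_zero.mpr hn.ne')]
  linarith

theorem empQuantileSet_bddBelow (hα : α < 1) (v : Fin n → ℝ) :
    BddBelow (empQuantileSet n α v) := by
  obtain ⟨m, hm⟩ := (Set.finite_range v).bddBelow
  refine ⟨m, fun x hx => ?_⟩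
  obtain ⟨j, hj⟩ : (Finset.univ.filter fun j => v j ≤ x).Nonempty := by
    by_contra hempty
    rw [Finset.not_nonempty_iff_eq_empty] at hempty
    rw [empQuantileSet, Set.mem_ofPred_eq, hempty, Finset.card_empty, Nat.cast_zero,
      zero_div] at hx
    linarith
  exact (hm (Set.mem_range_self j)).trans (Finset.mem_filter.mp hj).2

theorem empQuantile_le_add (hn : 0 < n) (hα₀ : 0 ≤ α) (hα₁ : α < 1) {v w : Fin n → ℝ}
    {c : ℝ} (h : ∀ j, w j ≤ v j + c) : empQuantile n α w ≤ empQuantile n α v + c := by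
  rw [empQuantile_eq_sInf, empQuantile_eq_sInf, ← sub_le_iff_le_add]
  refine le_csInf (empQuantileSet_nonempty hn hα₀ v) fun x hx => ?_
  rw [sub_le_iff_le_add]
  refine csInf_le (empQuantileSet_bddBelow hα₁ w) (mem_empQuantileSet_of_imp hx fun j hj => ?_)
  linarith [h j]

end EmpQuantile

/-- Let `H₁, …, H_K` be groups of `n` arms each with means `μ g j`, valid confidence
bounds `L g j ≤ μ g j ≤ U g j` all of width `< Δ/2`.  If `ghat` maximizes the
`(1-α)`-quantile of the lower bounds, then the true `(1-α)`-quantile of group `ghat`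
is within `Δ` of the best group's quantile. -/
theorem stmt17 (K n : ℕ) (hK : 0 < K) (hn : 0 < n) (α Δ : ℝ)
    (hα : α ∈ Set.Ioo (0 : ℝ) 1) (hΔ : 0 < Δ)
    (μ L U : Fin K → Fin n → ℝ)
    (hvalid : ∀ g j, L g j ≤ μ g j ∧ μ g j ≤ U g j)
    (hwidth : ∀ g j, U g j - L g j < Δ / 2)
    (ghat : Fin K)
    (hmax : ∀ g, empQuantile n α (L g) ≤ empQuantile n α (L ghat)) :
    (Finset.univ.sup' (Finset.univ_nonempty_iff.mpr (Fin.pos_iff_nonempty.mp hK))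
        (fun g => empQuantile n α (μ g))) - Δ
      ≤ empQuantile n α (μ ghat) := by
  rw [sub_le_iff_le_add]
  refine Finset.sup'_le _ _ fun g _ => ?_
  have hμ_le_L : empQuantile n α (μ g) ≤ empQuantile n α (L g) + Δ / 2 :=
    empQuantile_le_add hn hα.1.le hα.2 fun j => by linarith [(hvalid g j).2, hwidth g j]
  have hL_le_μ : empQuantile n α (L ghat) ≤ empQuantile n α (μ ghat) + 0 :=
    empQuantile_le_add hn hα.1.le hα.2 fun j => by linarith [(hvalid ghat j).1]
  linarith [hmax g]
end
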